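/- arXiv:cmp-lg/9807005 — 2 statements merged into one kernel-verified Lean document; each statement's English description precedes it below -/
import Mathlib

section
/- Let G = (N, Σ, P, S) be a context-free grammar, let p = (A → α₁Bα₂) be a production in P with A, B ∈ N and B ≠ A, and let B → β₁, B → β₂, …, B → βₙ be the complete list of productions of P whose left-hand side is B. Let G' = (N, Σ, P', S) be obtained from G by deleting the production p from P and adding instead the productions A → α₁β₁α₂, A → α₁β₂α₂, …, A → α₁βₙα₂. Then L(G') = L(G). -/
/-!
Every rule of the new grammar is simulated by at most two steps of the old one, so
`L(G') ⊆ L(G)`. Conversely, in a terminating derivation of `G` each use of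
`A → α₁Bα₂` is followed, inside the subderivation of the inserted `B`, by a first step with
some rule `B → βᵢ`; merging the two into `A → α₁βᵢα₂` gives a derivation in `G'`. Since a
derivation from a concatenation splits into derivations from its parts, this is a strong
induction on the length of derivations.
-/

namespace ContextFreeRule

variable {T N : Type} {r : ContextFreeRule T N}

lemma Rewrites.append_cases {x y v : List (Symbol T N)} (h : r.Rewrites (x ++ y) v) :
    (∃ x', r.Rewrites x x' ∧ v = x' ++ y) ∨ (∃ y', r.Rewrites y y' ∧ v = x ++ y') := by
  induction x generalizing v with
  | nil => exact .inr ⟨v, h, rfl⟩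
  | cons a x ih =>
    cases h with
    | head => exact .inl ⟨r.output ++ x, .head x, by simp⟩
    | cons _ h =>
      rcases ih h with ⟨x', hx, rfl⟩ | ⟨y', hy, rfl⟩
      · exact .inl ⟨a :: x', hx.cons a, rfl⟩
      · exact .inr ⟨y', hy, rfl⟩

lemma Rewrites.eq_output_of_singleton {X : N} {v : List (Symbol T N)}
    (h : r.Rewrites [.nonterminal X] v) : r.input = X ∧ v = r.output := by
  cases h with
  | head => simp
  | cons _ h => cases h

end ContextFreeRule

namespace ContextFreeGrammar

variable {T : Type} {g : ContextFreeGrammar T}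

inductive DerivesIn (g : ContextFreeGrammar T) :
    List (Symbol T g.NT) → List (Symbol T g.NT) → ℕ → Prop
  | refl (u : List (Symbol T g.NT)) : g.DerivesIn u u 0
  | head {u v w : List (Symbol T g.NT)} {n : ℕ} :
      g.Produces u v → g.DerivesIn v w n → g.DerivesIn u w (n + 1)

lemma DerivesIn.eq_of_zero {u v : List (Symbol T g.NT)} (h : g.DerivesIn u v 0) : u = v := by
  cases h
  rfl

lemma Derives.exists_derivesIn {u v : List (Symbol T g.NT)} (h : g.Derives u v) :
    ∃ n, g.DerivesIn u v n := by
  induction h using Relation.ReflTransGen.head_induction_on with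
  | refl => exact ⟨0, .refl v⟩
  | head huv _ ih =>
    obtain ⟨n, hn⟩ := ih
    exact ⟨n + 1, .head huv hn⟩

lemma Derives.append {x x' y y' : List (Symbol T g.NT)} (hx : g.Derives x x')
    (hy : g.Derives y y') : g.Derives (x ++ y) (x' ++ y') :=
  (hx.append_right y).trans (hy.append_left x')

lemma Produces.append_cases {x y v : List (Symbol T g.NT)} (h : g.Produces (x ++ y) v) :
    (∃ x', g.Produces x x' ∧ v = x' ++ y) ∨ (∃ y', g.Produces y y' ∧ v = x ++ y') := by
  obtain ⟨r, hr, hrw⟩ := h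
  rcases hrw.append_cases with ⟨x', hx, rfl⟩ | ⟨y', hy, rfl⟩
  · exact .inl ⟨x', ⟨r, hr, hx⟩, rfl⟩
  · exact .inr ⟨y', ⟨r, hr, hy⟩, rfl⟩

lemma DerivesIn.append_split {x y v : List (Symbol T g.NT)} {n : ℕ}
    (h : g.DerivesIn (x ++ y) v n) :
    ∃ v₁ v₂ n₁ n₂, v = v₁ ++ v₂ ∧ n₁ + n₂ = n ∧ g.DerivesIn x v₁ n₁ ∧ g.DerivesIn y v₂ n₂ := by
  generalize hxy : x ++ y = u at h
  induction h generalizing x y with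
  | refl => exact ⟨x, y, 0, 0, hxy.symm, rfl, .refl x, .refl y⟩
  | head huv _ ih =>
    subst hxy
    rcases huv.append_cases with ⟨x', hx, rfl⟩ | ⟨y', hy, rfl⟩
    · obtain ⟨v₁, v₂, n₁, n₂, rfl, rfl, h₁, h₂⟩ := ih rfl
      exact ⟨v₁, v₂, n₁ + 1, n₂, rfl, by omega, .head hx h₁, h₂⟩
    · obtain ⟨v₁, v₂, n₁, n₂, rfl, rfl, h₁, h₂⟩ := ih rfl
      exact ⟨v₁, v₂, n₁, n₂ + 1, rfl, by omega, h₁, .head hy h₂⟩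

lemma DerivesIn.exists_rule_of_nonterminal {X : g.NT} {v : List (Symbol T g.NT)} {n : ℕ}
    (h : g.DerivesIn [.nonterminal X] v (n + 1)) :
    ∃ r ∈ g.rules, r.input = X ∧ g.DerivesIn r.output v n := by
  obtain _ | ⟨⟨r, hr, hrw⟩, hv⟩ := h
  obtain ⟨hX, rfl⟩ := hrw.eq_output_of_singleton
  exact ⟨r, hr, hX, hv⟩

section Substitution

variable {T N : Type} {S S' : N} {P P' : Finset (ContextFreeRule T N)}

lemma derives_of_forall_rule_derives
    (h : ∀ r ∈ P', (mk N S P).Derives [.nonterminal r.input] r.output)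
    {u v : List (Symbol T N)} (huv : (mk N S' P').Derives u v) : (mk N S P).Derives u v := by
  induction huv with
  | refl => rfl
  | tail _ hvw ih =>
    obtain ⟨r, hr, hrw⟩ := hvw
    obtain ⟨x, y, rfl, rfl⟩ := hrw.exists_parts
    exact ih.trans (((h r hr).append_left x).append_right y)

variable {A B : N} {α₁ α₂ : List (Symbol T N)}

lemma derives_substituted_rule (hp : ⟨A, α₁ ++ .nonterminal B :: α₂⟩ ∈ P)
    {q : ContextFreeRule T N} (hq : q ∈ P) (hqB : q.input = B) :
    (mk N S P).Derives [.nonterminal A] (α₁ ++ q.output ++ α₂) := by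
  refine Produces.trans_derives ⟨_, hp, .input_output⟩ (Produces.single ⟨q, hq, ?_⟩)
  simpa [hqB] using q.rewrites_of_exists_parts α₁ α₂

lemma derives_of_derivesIn_of_substituted
    (hkeep : ∀ r ∈ P, r ≠ ⟨A, α₁ ++ .nonterminal B :: α₂⟩ → r ∈ P')
    (hsubst : ∀ q ∈ P, q.input = B → (⟨A, α₁ ++ q.output ++ α₂⟩ : ContextFreeRule T N) ∈ P')
    {n : ℕ} {u v : List (Symbol T N)} (h : (mk N S P).DerivesIn u v n)
    (hv : ∀ X, .nonterminal X ∉ v) : (mk N S' P').Derives u v := by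
  induction n using Nat.strong_induction_on generalizing u v with
  | _ n ih =>
    obtain _ | ⟨⟨r, hr, hrw⟩, hd⟩ := h
    · rfl
    by_cases hrp : r = ⟨A, α₁ ++ .nonterminal B :: α₂⟩
    · subst hrp
      obtain ⟨x, y, rfl, rfl⟩ := hrw.exists_parts
      rw [show x ++ (α₁ ++ .nonterminal B :: α₂) ++ y
          = (x ++ α₁) ++ ([.nonterminal B] ++ (α₂ ++ y)) by simp] at hd
      obtain ⟨v₁, v', n₁, n', rfl, hn, h₁, h'⟩ := hd.append_split
      obtain ⟨vB, v₂, k, n₂, rfl, hn', hB, h₂⟩ := h'.append_split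
      simp only [List.mem_append, not_or] at hv
      obtain _ | k := k
      · obtain rfl := hB.eq_of_zero
        exact ((hv B).2.1 (List.mem_singleton_self _)).elim
      obtain ⟨q, hq, hqB, hB⟩ := hB.exists_rule_of_nonterminal
      have hstep : (mk N S' P').Produces (x ++ [.nonterminal A] ++ y)
          (x ++ (α₁ ++ q.output ++ α₂) ++ y) :=
        ⟨_, hsubst q hq hqB, ContextFreeRule.rewrites_of_exists_parts ⟨A, _⟩ x y⟩
      refine hstep.trans_derives ?_
      rw [show x ++ (α₁ ++ q.output ++ α₂) ++ y = (x ++ α₁) ++ (q.output ++ (α₂ ++ y)) by simp]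
      exact (ih n₁ (by omega) h₁ fun X => (hv X).1).append
        ((ih k (by omega) hB fun X => (hv X).2.1).append (ih n₂ (by omega) h₂ fun X => (hv X).2.2))
    · exact Produces.trans_derives ⟨r, hkeep r hr hrp, hrw⟩ (ih _ (by omega) hd hv)

end Substitution

end ContextFreeGrammar

open ContextFreeGrammar in
theorem cfg_substitution_preserves_language_general {T N : Type} (S A B : N)
    (P P' : Finset (ContextFreeRule T N))
    (α₁ α₂ : List (Symbol T N))
    (hp : (⟨A, α₁ ++ Symbol.nonterminal B :: α₂⟩ : ContextFreeRule T N) ∈ P)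
    (hP' : ∀ r : ContextFreeRule T N,
      r ∈ P' ↔
        (r ∈ P ∧ r ≠ ⟨A, α₁ ++ Symbol.nonterminal B :: α₂⟩) ∨
        (∃ q ∈ P, q.input = B ∧ r = ⟨A, α₁ ++ q.output ++ α₂⟩)) :
    (ContextFreeGrammar.mk N S P').language = (ContextFreeGrammar.mk N S P).language := by
  ext w
  constructor
  · refine derives_of_forall_rule_derives fun r hr => ?_
    rcases (hP' r).mp hr with ⟨hrP, -⟩ | ⟨q, hq, hqB, rfl⟩
    · exact Produces.single ⟨r, hrP, .input_output⟩
    · exact derives_substituted_rule hp hq hqB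
  · intro hw
    obtain ⟨n, hn⟩ := Derives.exists_derivesIn hw
    exact derives_of_derivesIn_of_substituted (fun r hr hrp => (hP' r).mpr (.inl ⟨hr, hrp⟩))
      (fun q hq hqB => (hP' _).mpr (.inr ⟨q, hq, hqB, rfl⟩)) hn (by simp)

/-- Substituting all `B`-productions into the occurrence of `B` in the production
`A → α₁Bα₂` (deleting that production and adding `A → α₁βᵢα₂` for every
`B`-production `B → βᵢ`) preserves the generated language. -/
theorem cfg_substitution_preserves_language {T N : Type} (S A B : N)
    (P P' : Finset (ContextFreeRule T N))
    (α₁ α₂ : List (Symbol T N))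
    (hBA : B ≠ A)
    (hp : (⟨A, α₁ ++ Symbol.nonterminal B :: α₂⟩ : ContextFreeRule T N) ∈ P)
    (hP' : ∀ r : ContextFreeRule T N,
      r ∈ P' ↔
        (r ∈ P ∧ r ≠ ⟨A, α₁ ++ Symbol.nonterminal B :: α₂⟩) ∨
        (∃ q ∈ P, q.input = B ∧ r = ⟨A, α₁ ++ q.output ++ α₂⟩)) :
    (ContextFreeGrammar.mk N S P').language = (ContextFreeGrammar.mk N S P).language :=
  cfg_substitution_preserves_language_general S A B P P' α₁ α₂ hp hP'
end

section
/- Let G = (N, Σ, P, S) be an LL(1) context-free grammar in which every nonterminal is useful, i.e. every A ∈ N occurs in some leftmost sentential form of G and derives some terminal string. Then G contains no left recursion: there is no nonterminal A and string α ∈ (N ∪ Σ)* such that A ⇒⁺ Aα, where ⇒⁺ denotes one or more derivation steps. -/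
/-- A leftmost derivation step: the leftmost nonterminal occurrence (i.e. a nonterminal
preceded only by terminals) is rewritten using a rule of the grammar. -/
def LeftmostProduces {T : Type} (g : ContextFreeGrammar T)
    (u v : List (Symbol T g.NT)) : Prop :=
  ∃ r ∈ g.rules, ∃ (x : List T) (γ : List (Symbol T g.NT)),
    u = List.map Symbol.terminal x ++ Symbol.nonterminal r.input :: γ ∧
    v = List.map Symbol.terminal x ++ r.output ++ γ

/-- Zero or more leftmost derivation steps. -/
abbrev LeftmostDerives {T : Type} (g : ContextFreeGrammar T) :
    List (Symbol T g.NT) → List (Symbol T g.NT) → Prop :=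
  Relation.ReflTransGen (LeftmostProduces g)

/-- `G` is LL(1): whenever `S ⇒*lm wAγ` and two `A`-productions `A → α`, `A → β` admit
leftmost derivations `wαγ ⇒*lm wx` and `wβγ ⇒*lm wy` with `x` and `y` both empty or
beginning with the same terminal, the two productions coincide. -/
def IsLL1 {T : Type} (g : ContextFreeGrammar T) : Prop :=
  ∀ (w : List T) (A : g.NT) (γ : List (Symbol T g.NT))
    (r₁ r₂ : ContextFreeRule T g.NT),
    LeftmostDerives g [Symbol.nonterminal g.initial]
      (List.map Symbol.terminal w ++ Symbol.nonterminal A :: γ) →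
    r₁ ∈ g.rules → r₂ ∈ g.rules → r₁.input = A → r₂.input = A →
    ∀ x y : List T,
      LeftmostDerives g (List.map Symbol.terminal w ++ r₁.output ++ γ)
        (List.map Symbol.terminal (w ++ x)) →
      LeftmostDerives g (List.map Symbol.terminal w ++ r₂.output ++ γ)
        (List.map Symbol.terminal (w ++ y)) →
      ((x = [] ∧ y = []) ∨ ∃ (a : T) (x' y' : List T), x = a :: x' ∧ y = a :: y') →
      r₁.output = r₂.output

/-- `G` is in Greibach Normal Form: every production is of the form `A → aγ`
with `a` a terminal and `γ` a string of nonterminals. -/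
def InGNF {T : Type} (g : ContextFreeGrammar T) : Prop :=
  ∀ r ∈ g.rules, ∃ (a : T) (γ : List g.NT),
    r.output = Symbol.terminal a :: List.map Symbol.nonterminal γ

/-!
A left-recursive derivation `A ⇒⁺ Aα` can be made leftmost, `A ⇒⁺lm Aβ`. By usefulness `A`
occurs in a reachable leftmost form `wAγ`, hence so does `wAβγ`, and every string derives a
terminal string, say `β ⇒ y` and `γ ⇒ u`. Take a shortest leftmost derivation `A ⇒ⁿlm v` of a
terminal string. In the context `w _ βγ`, every form on the loop has two continuations: the rest
of the derivation of `v` followed by `βγ ⇒ yu`, and the rest of the loop followed by `Aβ ⇒ vy`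
and `βγ ⇒ yu`. The lookaheads `vyu` and `vyyu` start alike, so LL(1) forces the derivation of
`v` to follow the loop rule by rule. Hence `Aβ` derives `v` in fewer than `n` steps, so `A`
derives a prefix of `v` in fewer than `n` steps, contradicting minimality.
-/

open Relation Symbol

section Lists

variable {T : Type} {N : Type*}

lemma map_terminal_append_nonterminal_cons_inj {x x' : List T} {A A' : N}
    {γ γ' : List (Symbol T N)}
    (h : x.map terminal ++ nonterminal A :: γ = x'.map terminal ++ nonterminal A' :: γ') :
    x = x' ∧ A = A' ∧ γ = γ' := by
  induction x generalizing x' with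
  | nil => cases x' <;> simp_all
  | cons a x ih =>
    cases x' with
    | nil => simp at h
    | cons a' x' =>
      simp only [List.map_cons, List.cons_append, List.cons.injEq, terminal.injEq] at h
      obtain ⟨rfl, h⟩ := h
      simpa using ih h

lemma eq_map_terminal_or_exists_nonterminal (u : List (Symbol T N)) :
    (∃ x : List T, u = x.map terminal) ∨
      ∃ (x : List T) (A : N) (γ : List (Symbol T N)), u = x.map terminal ++ nonterminal A :: γ := by
  induction u with
  | nil => exact .inl ⟨[], rfl⟩
  | cons s u ih =>
    cases s with
    | terminal a =>
      rcases ih with ⟨x, rfl⟩ | ⟨x, A, γ, rfl⟩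
      · exact .inl ⟨a :: x, rfl⟩
      · exact .inr ⟨a :: x, A, γ, rfl⟩
    | nonterminal A => exact .inr ⟨[], A, u, rfl⟩

lemma List.head?_eq_head?_iff {α : Type*} {x y : List α} :
    x.head? = y.head? ↔ (x = [] ∧ y = []) ∨ ∃ a x' y', x = a :: x' ∧ y = a :: y' := by
  cases x <;> cases y <;> simp [eq_comm]

end Lists

section Leftmost

variable {T : Type}

def LeftmostDerivesIn (g : ContextFreeGrammar T) :
    ℕ → List (Symbol T g.NT) → List (Symbol T g.NT) → Prop
  | 0, u, v => u = v
  | n + 1, u, w => ∃ v, LeftmostProduces g u v ∧ LeftmostDerivesIn g n v w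

variable {g : ContextFreeGrammar T}

lemma leftmostProduces_map_terminal_append_iff {x : List T} {A : g.NT}
    {γ v : List (Symbol T g.NT)} :
    LeftmostProduces g (x.map terminal ++ nonterminal A :: γ) v ↔
      ∃ r ∈ g.rules, r.input = A ∧ v = x.map terminal ++ r.output ++ γ := by
  constructor
  · rintro ⟨r, hr, x', γ', h, rfl⟩
    obtain ⟨rfl, rfl, rfl⟩ := map_terminal_append_nonterminal_cons_inj h
    exact ⟨r, hr, rfl, rfl⟩
  · rintro ⟨r, hr, rfl, rfl⟩
    exact ⟨r, hr, x, γ, rfl, rfl⟩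

lemma LeftmostProduces.append_context {u v : List (Symbol T g.NT)}
    (h : LeftmostProduces g u v) (w : List T) (γ : List (Symbol T g.NT)) :
    LeftmostProduces g (w.map terminal ++ u ++ γ) (w.map terminal ++ v ++ γ) := by
  obtain ⟨r, hr, x, δ, rfl, rfl⟩ := h
  exact ⟨r, hr, w ++ x, δ ++ γ, by simp, by simp⟩

lemma LeftmostDerives.append_context {u v : List (Symbol T g.NT)}
    (h : LeftmostDerives g u v) (w : List T) (γ : List (Symbol T g.NT)) :
    LeftmostDerives g (w.map terminal ++ u ++ γ) (w.map terminal ++ v ++ γ) :=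
  h.lift (fun u => w.map terminal ++ u ++ γ) fun _ _ h => h.append_context w γ

lemma LeftmostDerives.append_map_terminal {u q : List (Symbol T g.NT)} {a b : List T}
    (hu : LeftmostDerives g u (a.map terminal)) (hq : LeftmostDerives g q (b.map terminal)) :
    LeftmostDerives g (u ++ q) ((a ++ b).map terminal) := by
  have h₁ := hu.append_context [] q
  have h₂ := hq.append_context a []
  simp only [List.map_nil, List.nil_append, List.append_nil, List.map_append] at h₁ h₂ ⊢
  exact h₁.trans h₂

lemma LeftmostDerives.exists_eq_terminal_cons {a : T} {u v : List (Symbol T g.NT)}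
    (h : LeftmostDerives g (terminal a :: u) v) : ∃ v', v = terminal a :: v' := by
  induction h with
  | refl => exact ⟨u, rfl⟩
  | tail _ hstep ih =>
    obtain ⟨v', rfl⟩ := ih
    obtain ⟨r, -, x, γ, hx, rfl⟩ := hstep
    cases x with
    | nil => simp at hx
    | cons b x =>
      obtain ⟨rfl, -⟩ := by simpa using hx
      exact ⟨_, rfl⟩

lemma LeftmostProduces.exists_eq_nonterminal_cons {μ μ₁ β : List (Symbol T g.NT)} {C : g.NT}
    (h : LeftmostProduces g μ μ₁) (h₁ : LeftmostDerives g μ₁ (nonterminal C :: β)) :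
    ∃ r ∈ g.rules, ∃ δ, μ = nonterminal r.input :: δ ∧ μ₁ = r.output ++ δ := by
  obtain ⟨r, hr, x, δ, rfl, rfl⟩ := h
  cases x with
  | nil => exact ⟨r, hr, δ, rfl, rfl⟩
  | cons a x =>
    have h₁' : LeftmostDerives g (terminal a :: (x.map terminal ++ r.output ++ δ))
        (nonterminal C :: β) := by simpa using h₁
    obtain ⟨_, h⟩ := h₁'.exists_eq_terminal_cons
    simp at h

lemma leftmostProduces_of_produces_singleton {A : g.NT} {v : List (Symbol T g.NT)}
    (h : g.Produces [nonterminal A] v) : LeftmostProduces g [nonterminal A] v := by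
  obtain ⟨r, hr, hrw⟩ := h
  cases hrw with
  | head => exact ⟨r, hr, [], _, rfl, rfl⟩
  | cons x h => cases h

/-- Moving a step behind a leftmost derivation keeps the derivation leftmost at least up to the
leftmost nonterminal of the target. -/
lemma leftmostDerives_or_of_produces_leftmostDerives {u v t : List (Symbol T g.NT)}
    (huv : g.Produces u v) (hvt : LeftmostDerives g v t) :
    LeftmostDerives g u t ∨ ∃ (x : List T) (A : g.NT) (γ γ' : List (Symbol T g.NT)),
      LeftmostDerives g u (x.map terminal ++ nonterminal A :: γ) ∧
        t = x.map terminal ++ nonterminal A :: γ' := by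
  induction hvt using Relation.ReflTransGen.head_induction_on generalizing u with
  | refl =>
    obtain ⟨r, hr, hrw⟩ := huv
    obtain ⟨p, q, rfl, rfl⟩ := ContextFreeRule.rewrites_iff.1 hrw
    rcases eq_map_terminal_or_exists_nonterminal p with ⟨x, rfl⟩ | ⟨x, A, p, rfl⟩
    · exact .inl (.single ⟨r, hr, x, q, by simp, rfl⟩)
    · exact .inr ⟨x, A, p ++ nonterminal r.input :: q, p ++ r.output ++ q,
        by simpa using ReflTransGen.refl, by simp⟩
  | head hstep hrest ih =>
    obtain ⟨r, hr, hrw⟩ := huv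
    obtain ⟨p, q, rfl, rfl⟩ := ContextFreeRule.rewrites_iff.1 hrw
    rcases eq_map_terminal_or_exists_nonterminal p with ⟨x, rfl⟩ | ⟨x, A, p, rfl⟩
    · exact .inl (.head ⟨r, hr, x, q, by simp, rfl⟩ (.head hstep hrest))
    · simp only [List.append_assoc, List.cons_append] at hstep
      obtain ⟨s, hs, rfl, rfl⟩ := leftmostProduces_map_terminal_append_iff.1 hstep
      have hswap : LeftmostProduces g
          (x.map terminal ++ nonterminal s.input :: p ++ [nonterminal r.input] ++ q)
          (x.map terminal ++ s.output ++ p ++ [nonterminal r.input] ++ q) := by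
        simpa using (leftmostProduces_map_terminal_append_iff
          (γ := p ++ nonterminal r.input :: q)).2 ⟨s, hs, rfl, rfl⟩
      have hprod : g.Produces (x.map terminal ++ s.output ++ p ++ [nonterminal r.input] ++ q)
          (x.map terminal ++ s.output ++ (p ++ (r.output ++ q))) := by
        have h := r.rewrites_of_exists_parts (x.map terminal ++ s.output ++ p) q
        simp only [List.append_assoc] at h ⊢
        exact ⟨r, hr, h⟩
      refine (ih hprod).imp (fun h => .head hswap h) ?_
      rintro ⟨x', A', γ, γ', h, ht⟩
      exact ⟨x', A', γ, γ', .head hswap h, ht⟩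

lemma leftmostDerives_of_derives_map_terminal {u : List (Symbol T g.NT)} {t : List T}
    (h : g.Derives u (t.map terminal)) : LeftmostDerives g u (t.map terminal) := by
  induction h using Relation.ReflTransGen.head_induction_on with
  | refl => exact .refl
  | head huv _ ih =>
    refine (leftmostDerives_or_of_produces_leftmostDerives huv ih).resolve_right ?_
    rintro ⟨x, A, γ, γ', -, ht⟩
    have hA : nonterminal A ∈ t.map terminal := ht ▸ by simp
    simp at hA

lemma exists_leftmostDerives_of_derives_nonterminal_cons {u α : List (Symbol T g.NT)}
    {A : g.NT} (h : g.Derives u (nonterminal A :: α)) :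
    ∃ β, LeftmostDerives g u (nonterminal A :: β) := by
  induction h using Relation.ReflTransGen.head_induction_on with
  | refl => exact ⟨α, .refl⟩
  | head huv _ ih =>
    obtain ⟨β, hβ⟩ := ih
    rcases leftmostDerives_or_of_produces_leftmostDerives huv hβ with h | ⟨x, B, γ, γ', h, ht⟩
    · exact ⟨β, h⟩
    · cases x with
      | nil =>
        obtain ⟨rfl, -⟩ : A = B ∧ β = γ' := by simpa using ht
        exact ⟨γ, h⟩
      | cons a x => simp at ht

lemma exists_transGen_leftmostProduces_of_transGen_produces {A C : g.NT}
    {α : List (Symbol T g.NT)} (h : TransGen g.Produces [nonterminal A] (nonterminal C :: α)) :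
    ∃ β, TransGen (LeftmostProduces g) [nonterminal A] (nonterminal C :: β) := by
  obtain ⟨v, hAv, hv⟩ := TransGen.head'_iff.1 h
  obtain ⟨β, hβ⟩ := exists_leftmostDerives_of_derives_nonterminal_cons hv
  exact ⟨β, .head' (leftmostProduces_of_produces_singleton hAv) hβ⟩

lemma exists_leftmostDerives_map_terminal
    (hterm : ∀ A : g.NT, ∃ t : List T, LeftmostDerives g [nonterminal A] (t.map terminal))
    (u : List (Symbol T g.NT)) : ∃ t : List T, LeftmostDerives g u (t.map terminal) := by
  induction u with
  | nil => exact ⟨[], .refl⟩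
  | cons s u ih =>
    obtain ⟨t, ht⟩ := ih
    cases s with
    | terminal a => exact ⟨a :: t, by simpa using ht.append_context [a] []⟩
    | nonterminal A =>
      obtain ⟨tA, hA⟩ := hterm A
      exact ⟨tA ++ t, hA.append_map_terminal ht⟩

lemma exists_leftmostDerives_map_terminal_append_nonterminal_cons
    (hterm : ∀ A : g.NT, ∃ t : List T, LeftmostDerives g [nonterminal A] (t.map terminal))
    {s δ : List (Symbol T g.NT)} {A : g.NT} (hδ : LeftmostDerives g s δ) (hA : nonterminal A ∈ δ) :
    ∃ (w : List T) (γ : List (Symbol T g.NT)),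
      LeftmostDerives g s (w.map terminal ++ nonterminal A :: γ) := by
  obtain ⟨δ₁, γ, rfl⟩ := List.append_of_mem hA
  obtain ⟨w, hw⟩ := exists_leftmostDerives_map_terminal hterm δ₁
  exact ⟨w, γ, hδ.trans (by simpa using hw.append_context [] (nonterminal A :: γ))⟩

lemma LeftmostDerivesIn.leftmostDerives {n : ℕ} {u v : List (Symbol T g.NT)}
    (h : LeftmostDerivesIn g n u v) : LeftmostDerives g u v := by
  induction n generalizing u with
  | zero => exact h ▸ .refl
  | succ n ih =>
    obtain ⟨w, hstep, hrest⟩ := h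
    exact .head hstep (ih hrest)

lemma LeftmostDerives.exists_leftmostDerivesIn {u v : List (Symbol T g.NT)}
    (h : LeftmostDerives g u v) : ∃ n, LeftmostDerivesIn g n u v := by
  induction h using Relation.ReflTransGen.head_induction_on with
  | refl => exact ⟨0, rfl⟩
  | head hstep _ ih =>
    obtain ⟨n, hn⟩ := ih
    exact ⟨n + 1, _, hstep, hn⟩

lemma LeftmostDerivesIn.exists_le_of_append {n : ℕ} {u q : List (Symbol T g.NT)} {t : List T}
    (h : LeftmostDerivesIn g n (u ++ q) (t.map terminal)) :
    ∃ m ≤ n, ∃ t₁ : List T, LeftmostDerivesIn g m u (t₁.map terminal) := by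
  induction n generalizing u with
  | zero =>
    obtain ⟨t₁, -, -, rfl, -⟩ := List.map_eq_append_iff.1 (show u ++ q = _ from h).symm
    exact ⟨0, le_rfl, t₁, rfl⟩
  | succ n ih =>
    rcases eq_map_terminal_or_exists_nonterminal u with ⟨x, rfl⟩ | ⟨x, A, γ, rfl⟩
    · exact ⟨0, Nat.zero_le _, x, rfl⟩
    obtain ⟨v, hstep, hrest⟩ := h
    simp only [List.append_assoc, List.cons_append] at hstep
    obtain ⟨r, hr, rfl, rfl⟩ := leftmostProduces_map_terminal_append_iff.1 hstep
    obtain ⟨m, hm, t₁, h₁⟩ := ih (u := x.map terminal ++ r.output ++ γ) (by simpa using hrest)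
    exact ⟨m + 1, by omega, t₁, _, leftmostProduces_map_terminal_append_iff.2 ⟨r, hr, rfl, rfl⟩, h₁⟩

end Leftmost

section LL1

variable {T : Type} {g : ContextFreeGrammar T}

lemma IsLL1.exists_leftmostDerivesIn_output_of_lookahead (hLL1 : IsLL1 g)
    {r : ContextFreeRule T g.NT} (hr : r ∈ g.rules) {δ γ : List (Symbol T g.NT)}
    {w c z v : List T} {n : ℕ}
    (hreach : LeftmostDerives g [nonterminal g.initial]
      (w.map terminal ++ nonterminal r.input :: (δ ++ γ)))
    (hγ : LeftmostDerives g γ (c.map terminal))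
    (hz : LeftmostDerives g (r.output ++ δ) (z.map terminal))
    (hlook : (v ++ c).head? = (z ++ c).head?)
    (hv : LeftmostDerivesIn g n (nonterminal r.input :: δ) (v.map terminal)) :
    ∃ m, n = m + 1 ∧ LeftmostDerivesIn g m (r.output ++ δ) (v.map terminal) := by
  cases n with
  | zero => cases v <;> simp [LeftmostDerivesIn] at hv
  | succ m =>
    obtain ⟨μ, hstep, hrest⟩ := hv
    obtain ⟨s, hs, hsr, rfl⟩ := (leftmostProduces_map_terminal_append_iff (x := [])).1 hstep
    have hout : s.output = r.output := by
      refine hLL1 w r.input (δ ++ γ) s r hreach hs hr hsr rfl (v ++ c) (z ++ c) ?_ ?_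
        (List.head?_eq_head?_iff.1 hlook)
      · simpa using (hrest.leftmostDerives.append_map_terminal hγ).append_context w []
      · simpa using (hz.append_map_terminal hγ).append_context w []
    exact ⟨m, rfl, by simpa [hout] using hrest⟩

lemma IsLL1.exists_lt_leftmostDerivesIn_of_transGen (hLL1 : IsLL1 g)
    {μ β γ : List (Symbol T g.NT)} {C : g.NT} {w c z v : List T} {n : ℕ}
    (hloop : TransGen (LeftmostProduces g) μ (nonterminal C :: β))
    (hreach : LeftmostDerives g [nonterminal g.initial] (w.map terminal ++ μ ++ γ))
    (hγ : LeftmostDerives g γ (c.map terminal))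
    (hz : LeftmostDerives g (nonterminal C :: β) (z.map terminal))
    (hlook : (v ++ c).head? = (z ++ c).head?)
    (hv : LeftmostDerivesIn g n μ (v.map terminal)) :
    ∃ m < n, LeftmostDerivesIn g m (nonterminal C :: β) (v.map terminal) := by
  induction hloop using Relation.TransGen.head_induction_on generalizing n with
  | single hstep =>
    obtain ⟨r, hr, δ, rfl, hCβ⟩ := hstep.exists_eq_nonterminal_cons .refl
    rw [hCβ] at hz ⊢
    obtain ⟨m, rfl, hm⟩ :=
      hLL1.exists_leftmostDerivesIn_output_of_lookahead hr (by simpa using hreach) hγ hz hlook hv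
    exact ⟨m, by omega, hm⟩
  | head hstep hrest ih =>
    obtain ⟨r, hr, δ, rfl, rfl⟩ := hstep.exists_eq_nonterminal_cons hrest.to_reflTransGen
    obtain ⟨m, rfl, hm⟩ := hLL1.exists_leftmostDerivesIn_output_of_lookahead hr
      (by simpa using hreach) hγ (hrest.to_reflTransGen.trans hz) hlook hv
    obtain ⟨k, hk, hk'⟩ := ih (hreach.tail (hstep.append_context w γ)) hm
    exact ⟨k, by omega, hk'⟩

end LL1

/-- An LL(1) grammar in which every nonterminal is useful (occurs in some leftmost
sentential form and derives some terminal string) contains no left recursion: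
no nonterminal `A` satisfies `A ⇒⁺ Aα`. -/
theorem ll1_no_left_recursion {T : Type} (g : ContextFreeGrammar T)
    (hLL1 : IsLL1 g)
    (huseful : ∀ A : g.NT,
      (∃ δ : List (Symbol T g.NT),
        LeftmostDerives g [Symbol.nonterminal g.initial] δ ∧ Symbol.nonterminal A ∈ δ) ∧
      (∃ w : List T, g.Derives [Symbol.nonterminal A] (List.map Symbol.terminal w))) :
    ¬ ∃ (A : g.NT) (α : List (Symbol T g.NT)),
        Relation.TransGen g.Produces [Symbol.nonterminal A]
          (Symbol.nonterminal A :: α) := by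
  classical
  rintro ⟨A, α, hleft⟩
  have hterm (B : g.NT) : ∃ t : List T, LeftmostDerives g [nonterminal B] (t.map terminal) :=
    let ⟨t, ht⟩ := (huseful B).2; ⟨t, leftmostDerives_of_derives_map_terminal ht⟩
  obtain ⟨β, hloop⟩ := exists_transGen_leftmostProduces_of_transGen_produces hleft
  obtain ⟨δ, hδ, hAδ⟩ := (huseful A).1
  obtain ⟨w, δ₂, hw⟩ := exists_leftmostDerives_map_terminal_append_nonterminal_cons hterm hδ hAδ
  obtain ⟨y, hy⟩ := exists_leftmostDerives_map_terminal hterm β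
  obtain ⟨u, hu⟩ := exists_leftmostDerives_map_terminal hterm δ₂
  have hreach : LeftmostDerives g [nonterminal g.initial]
      (w.map terminal ++ [nonterminal A] ++ (β ++ δ₂)) := by
    have h := LeftmostDerives.append_context hloop.to_reflTransGen w δ₂
    simp only [List.append_assoc, List.cons_append] at h ⊢
    exact hw.trans h
  have hex : ∃ n, ∃ v : List T, LeftmostDerivesIn g n [nonterminal A] (v.map terminal) :=
    let ⟨v, hv⟩ := hterm A; let ⟨n, hn⟩ := hv.exists_leftmostDerivesIn; ⟨n, v, hn⟩
  obtain ⟨v, hv⟩ := Nat.find_spec hex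
  obtain ⟨m, hm, hm'⟩ := hLL1.exists_lt_leftmostDerivesIn_of_transGen (z := v ++ y) hloop hreach
    (hy.append_map_terminal hu) (hv.leftmostDerives.append_map_terminal hy)
    (by cases v <;> cases y <;> simp) hv
  obtain ⟨k, hk, v₁, hv₁⟩ := LeftmostDerivesIn.exists_le_of_append (u := [nonterminal A]) hm'
  exact Nat.find_min hex (by omega) ⟨v₁, hv₁⟩
end
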